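/- Let U ⊆ ℝ² be open, h : U → ℝ smooth, λ ∈ ℝ, and set f(x¹, x², x₁', x₂') = h(x¹, x²) on U × ℝ². Then the gradient Ricci soliton equation Hes_f(∂_a, ∂_b) + ρ_{ab} = λ g_{ab} holds on U × ℝ² for all a, b ∈ {1, 2, 1', 2'} if and only if λ = 0 and h satisfies the affine gradient Ricci soliton equation ∂_i∂_j h − Σ_k Γ^k_{ij} ∂_k h + 2 ρ^{D,sym}_{ij} = 0 on U for all i, j ∈ {1, 2}. In particular this holds for every choice of the deformation tensor Φ. -/

import Mathlib

noncomputable section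

/-- Points of the affine surface `Σ` (local coordinates `(x¹,x²)`). -/
abbrev Pt2 := Fin 2 → ℝ
/-- Points of the cotangent bundle `T*Σ` (coordinates `(x¹,x²,x₁',x₂')`). -/
abbrev Pt4 := Fin 4 → ℝ

/-- Projection to the base coordinates. -/
def base (p : Pt4) : Pt2 := ![p 0, p 1]

/-- Unprimed index `i ∈ {1,2}` as an index in `{1,2,1',2'}`. -/
def unp (i : Fin 2) : Fin 4 := ⟨i.1, by omega⟩
/-- Primed index `i' ∈ {1',2'}` as an index in `{1,2,1',2'}`. -/
def pr (i : Fin 2) : Fin 4 := ⟨i.1 + 2, by omega⟩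

/-- Partial derivative `∂_{x^i}` on the surface. -/
def pd2 (i : Fin 2) (f : Pt2 → ℝ) (p : Pt2) : ℝ :=
  fderiv ℝ f p (Pi.single i 1)

/-- Partial derivative `∂_a` on the cotangent bundle. -/
def pd4 (a : Fin 4) (f : Pt4 → ℝ) (p : Pt4) : ℝ :=
  fderiv ℝ f p (Pi.single a 1)

/-- The component `𝚪^{k'}_{ij}` of the Levi-Civita connection of a deformed
Riemannian extension. -/
def GammaPr (Γ : Fin 2 → Fin 2 → Fin 2 → Pt2 → ℝ) (Φ : Fin 2 → Fin 2 → Pt2 → ℝ)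
    (k i j : Fin 2) (p : Pt4) : ℝ :=
  (∑ r : Fin 2, p (pr r) *
      (pd2 k (Γ r i j) (base p) - pd2 i (Γ r j k) (base p) - pd2 j (Γ r i k) (base p)
        + 2 * ∑ l : Fin 2, Γ r k l (base p) * Γ l i j (base p)))
    + (1 / 2) * (pd2 i (Φ j k) (base p) + pd2 j (Φ i k) (base p) - pd2 k (Φ i j) (base p))
    - ∑ l : Fin 2, Φ k l (base p) * Γ l i j (base p)

/-- The Christoffel symbols `𝚪^a_{bc}` of the Levi-Civita connection of the deformed
Riemannian extension `g_{D,Φ}`:  `𝚪^k_{ij} = Γ^k_{ij}`, `𝚪^{k'}_{i'j} = 𝚪^{k'}_{j i'} = −Γ^i_{jk}`,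
`𝚪^{k'}_{ij} = GammaPr`, and all other coefficients zero. -/
def GG (Γ : Fin 2 → Fin 2 → Fin 2 → Pt2 → ℝ) (Φ : Fin 2 → Fin 2 → Pt2 → ℝ)
    (a b c : Fin 4) (p : Pt4) : ℝ :=
  if ha : a.1 < 2 then
    if hb : b.1 < 2 then
      if hc : c.1 < 2 then Γ ⟨a.1, ha⟩ ⟨b.1, hb⟩ ⟨c.1, hc⟩ (base p) else 0
    else 0
  else
    if hb : b.1 < 2 then
      if hc : c.1 < 2 then GammaPr Γ Φ ⟨a.1 - 2, by omega⟩ ⟨b.1, hb⟩ ⟨c.1, hc⟩ p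
      else -Γ ⟨c.1 - 2, by omega⟩ ⟨b.1, hb⟩ ⟨a.1 - 2, by omega⟩ (base p)
    else
      if hc : c.1 < 2 then -Γ ⟨b.1 - 2, by omega⟩ ⟨c.1, hc⟩ ⟨a.1 - 2, by omega⟩ (base p)
      else 0

/-- The deformed Riemannian extension metric `g_{D,Φ}`:
`g_{ij} = Φ_{ij} − 2(x₁' Γ¹_{ij} + x₂' Γ²_{ij})`, `g_{i j'} = g_{j' i} = δ_i^j`, `g_{i'j'} = 0`. -/
def gDE (Γ : Fin 2 → Fin 2 → Fin 2 → Pt2 → ℝ) (Φ : Fin 2 → Fin 2 → Pt2 → ℝ)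
    (a b : Fin 4) (p : Pt4) : ℝ :=
  if ha : a.1 < 2 then
    if hb : b.1 < 2 then
      Φ ⟨a.1, ha⟩ ⟨b.1, hb⟩ (base p)
        - 2 * ∑ r : Fin 2, p (pr r) * Γ r ⟨a.1, ha⟩ ⟨b.1, hb⟩ (base p)
    else if b.1 = a.1 + 2 then 1 else 0
  else
    if b.1 < 2 then (if a.1 = b.1 + 2 then 1 else 0) else 0

/-- The Ricci tensor `ρ_{ab}` of `g_{D,Φ}`, computed from its Christoffel symbols. -/
def ricci4 (Γ : Fin 2 → Fin 2 → Fin 2 → Pt2 → ℝ) (Φ : Fin 2 → Fin 2 → Pt2 → ℝ)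
    (a b : Fin 4) (p : Pt4) : ℝ :=
  (∑ c : Fin 4, pd4 c (GG Γ Φ c a b) p) - pd4 a (fun q => ∑ c : Fin 4, GG Γ Φ c c b q) p
    + ∑ c : Fin 4, ∑ d : Fin 4,
        (GG Γ Φ c c d p * GG Γ Φ d a b p - GG Γ Φ c a d p * GG Γ Φ d c b p)

/-- The Hessian `Hes_f(∂_a,∂_b) = ∂_a∂_b f − Σ_c 𝚪^c_{ab} ∂_c f` on `T*Σ`. -/
def hess4 (Γ : Fin 2 → Fin 2 → Fin 2 → Pt2 → ℝ) (Φ : Fin 2 → Fin 2 → Pt2 → ℝ)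
    (f : Pt4 → ℝ) (a b : Fin 4) (p : Pt4) : ℝ :=
  pd4 a (pd4 b f) p - ∑ c : Fin 4, GG Γ Φ c a b p * pd4 c f p

/-- The Ricci tensor `ρ^D_{ij}` of the affine connection `D` on the surface. -/
def ricciD (Γ : Fin 2 → Fin 2 → Fin 2 → Pt2 → ℝ) (i j : Fin 2) (p : Pt2) : ℝ :=
  (∑ k : Fin 2, pd2 k (Γ k i j) p) - pd2 i (fun q => ∑ k : Fin 2, Γ k k j q) p
    + ∑ k : Fin 2, ∑ l : Fin 2, (Γ k k l p * Γ l i j p - Γ k i l p * Γ l k j p)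

/-- The symmetrized Ricci tensor `ρ^{D,sym}_{ij}` of `D`. -/
def ricciDSym (Γ : Fin 2 → Fin 2 → Fin 2 → Pt2 → ℝ) (i j : Fin 2) (p : Pt2) : ℝ :=
  (ricciD Γ i j p + ricciD Γ j i p) / 2

/-- The affine Hessian `Hes^D_h(∂_i,∂_j) = ∂_i∂_j h − Σ_k Γ^k_{ij} ∂_k h` on the surface. -/
def hessD (Γ : Fin 2 → Fin 2 → Fin 2 → Pt2 → ℝ) (h : Pt2 → ℝ) (i j : Fin 2) (p : Pt2) : ℝ :=
  pd2 i (pd2 j h) p - ∑ k : Fin 2, Γ k i j p * pd2 k h p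


/-! ### Auxiliary machinery -/

section Aux

/-- The base projection as a continuous linear map. -/
def baseL : Pt4 →L[ℝ] Pt2 :=
  ContinuousLinearMap.pi fun i => ContinuousLinearMap.proj (unp i)

lemma baseL_apply (p : Pt4) : baseL p = base p := by
  funext i; fin_cases i <;> simp [baseL, base, unp] <;> rfl

lemma base_eq : base = ⇑baseL := by funext p; exact (baseL_apply p).symm

lemma baseL_single_unp (k : Fin 2) : baseL (Pi.single (unp k) 1) = Pi.single k 1 := by
  funext i
  simp only [baseL, ContinuousLinearMap.pi_apply, ContinuousLinearMap.proj_apply]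
  rw [Pi.single_apply, Pi.single_apply]
  have huk : (unp i = unp k) ↔ (i = k) := by
    constructor
    · intro hh; exact Fin.ext (by simpa [unp, Fin.ext_iff] using hh)
    · rintro rfl; rfl
  simp [huk]

lemma baseL_single_pr (k : Fin 2) : baseL (Pi.single (pr k) 1) = 0 := by
  funext i
  simp only [baseL, ContinuousLinearMap.pi_apply, ContinuousLinearMap.proj_apply]
  rw [Pi.single_apply]
  have hne : unp i ≠ pr k := by simp [unp, pr, Fin.ext_iff]; omega
  simp [hne]

lemma diffat_comp_base {g : Pt2 → ℝ} {p : Pt4} (hg : DifferentiableAt ℝ g (base p)) :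
    DifferentiableAt ℝ (fun q => g (base q)) p := by
  rw [base_eq] at hg ⊢
  exact hg.comp p baseL.differentiableAt

lemma pd4_comp_base {g : Pt2 → ℝ} {p : Pt4} (hg : DifferentiableAt ℝ g (base p)) (a : Fin 4) :
    pd4 a (fun q => g (base q)) p = fderiv ℝ g (base p) (baseL (Pi.single a 1)) := by
  have h1 : (fun q => g (base q)) = g ∘ ⇑baseL := by funext q; simp [base_eq]
  rw [pd4, h1, fderiv_comp p (by rw [← base_eq]; exact hg) baseL.differentiableAt]
  simp [base_eq]

lemma pd4_unp_comp_base {g : Pt2 → ℝ} {p : Pt4} (hg : DifferentiableAt ℝ g (base p)) (k : Fin 2) :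
    pd4 (unp k) (fun q => g (base q)) p = pd2 k g (base p) := by
  rw [pd4_comp_base hg, baseL_single_unp]; rfl

lemma pd4_pr_comp_base {g : Pt2 → ℝ} {p : Pt4} (hg : DifferentiableAt ℝ g (base p)) (k : Fin 2) :
    pd4 (pr k) (fun q => g (base q)) p = 0 := by
  rw [pd4_comp_base hg, baseL_single_pr]; simp

lemma pd4_const (c : ℝ) (a : Fin 4) (p : Pt4) : pd4 a (fun _ => c) p = 0 := by
  simp [pd4]

lemma pd4_coord (a b : Fin 4) (p : Pt4) :
    pd4 a (fun q => q b) p = if b = a then 1 else 0 := by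
  have h1 : (fun q : Pt4 => q b)
      = ⇑(ContinuousLinearMap.proj (R := ℝ) (φ := fun _ : Fin 4 => ℝ) b) := rfl
  rw [pd4, h1, ContinuousLinearMap.fderiv]
  simp [Pi.single_apply]

lemma pd4_congr {f1 f2 : Pt4 → ℝ} {p : Pt4} (hev : f1 =ᶠ[nhds p] f2) (a : Fin 4) :
    pd4 a f1 p = pd4 a f2 p := by
  unfold pd4; rw [hev.fderiv_eq]

lemma pd4_add {f1 f2 : Pt4 → ℝ} {p : Pt4} (h1 : DifferentiableAt ℝ f1 p)
    (h2 : DifferentiableAt ℝ f2 p) (a : Fin 4) :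
    pd4 a (fun q => f1 q + f2 q) p = pd4 a f1 p + pd4 a f2 p := by
  simp [pd4, fderiv_fun_add h1 h2]

lemma pd4_mul {f1 f2 : Pt4 → ℝ} {p : Pt4} (h1 : DifferentiableAt ℝ f1 p)
    (h2 : DifferentiableAt ℝ f2 p) (a : Fin 4) :
    pd4 a (fun q => f1 q * f2 q) p = f1 p * pd4 a f2 p + f2 p * pd4 a f1 p := by
  simp [pd4, fderiv_fun_mul h1 h2]

lemma diffat_coord (r : Fin 4) (p : Pt4) : DifferentiableAt ℝ (fun q : Pt4 => q r) p :=
  (ContinuousLinearMap.proj (R := ℝ) (φ := fun _ : Fin 4 => ℝ) r).differentiableAt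

lemma pr_inj : Function.Injective pr := by
  intro a b hh; exact Fin.ext (by simpa [pr, Fin.ext_iff] using hh)

lemma diffat_of_cdo {U : Set Pt2} (hU : IsOpen U) {g : Pt2 → ℝ}
    (hg : ContDiffOn ℝ (⊤ : ℕ∞) g U) {x : Pt2} (hx : x ∈ U) : DifferentiableAt ℝ g x :=
  (hg.differentiableOn (by norm_num)).differentiableAt (hU.mem_nhds hx)

lemma cdo_pd2 {U : Set Pt2} (hU : IsOpen U) {g : Pt2 → ℝ}
    (hg : ContDiffOn ℝ (⊤ : ℕ∞) g U) (i : Fin 2) : ContDiffOn ℝ (⊤ : ℕ∞) (pd2 i g) U := by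
  have h1 : ContDiffOn ℝ (⊤ : ℕ∞) (fderiv ℝ g) U := hg.fderiv_of_isOpen hU (by norm_num)
  exact h1.clm_apply contDiffOn_const

lemma pd2_diffat {U : Set Pt2} (hU : IsOpen U) {g : Pt2 → ℝ}
    (hg : ContDiffOn ℝ (⊤ : ℕ∞) g U) {x : Pt2} (hx : x ∈ U) (i : Fin 2) :
    DifferentiableAt ℝ (pd2 i g) x :=
  diffat_of_cdo hU (cdo_pd2 hU hg i) hx

lemma pd2_add {g1 g2 : Pt2 → ℝ} {x : Pt2} (h1 : DifferentiableAt ℝ g1 x)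
    (h2 : DifferentiableAt ℝ g2 x) (i : Fin 2) :
    pd2 i (fun q => g1 q + g2 q) x = pd2 i g1 x + pd2 i g2 x := by
  simp [pd2, fderiv_fun_add h1 h2]

lemma sum4 (F : Fin 4 → ℝ) :
    ∑ c : Fin 4, F c = F (unp 0) + F (unp 1) + F (pr 0) + F (pr 1) :=
  Fin.sum_univ_four F

lemma cases4 (b : Fin 4) : (∃ i : Fin 2, b = unp i) ∨ ∃ i : Fin 2, b = pr i := by
  by_cases hb : b.1 < 2
  · exact Or.inl ⟨⟨b.1, hb⟩, Fin.ext rfl⟩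
  · exact Or.inr ⟨⟨b.1 - 2, by omega⟩, Fin.ext (by simp [pr]; omega)⟩

lemma pd4_fiber_linear (A : Fin 2 → Pt2 → ℝ) (B : Pt2 → ℝ) {p : Pt4}
    (hA : ∀ r, DifferentiableAt ℝ (A r) (base p)) (hB : DifferentiableAt ℝ B (base p))
    (s : Fin 2) :
    pd4 (pr s) (fun q => (∑ r : Fin 2, q (pr r) * A r (base q)) + B (base q)) p
      = A s (base p) := by
  have hc : ∀ r : Fin 2, DifferentiableAt ℝ (fun q : Pt4 => q (pr r)) p :=
    fun r => diffat_coord (pr r) p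
  have hA' : ∀ r : Fin 2, DifferentiableAt ℝ (fun q : Pt4 => A r (base q)) p :=
    fun r => diffat_comp_base (hA r)
  have hB' : DifferentiableAt ℝ (fun q : Pt4 => B (base q)) p := diffat_comp_base hB
  have hterm : ∀ r : Fin 2, DifferentiableAt ℝ (fun q : Pt4 => q (pr r) * A r (base q)) p :=
    fun r => (hc r).mul (hA' r)
  have hmul : ∀ r : Fin 2, pd4 (pr s) (fun q : Pt4 => q (pr r) * A r (base q)) p
      = if r = s then A r (base p) else 0 := by
    intro r
    rw [pd4_mul (hc r) (hA' r), pd4_pr_comp_base (hA r), pd4_coord]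
    by_cases hrs : r = s
    · subst hrs; simp
    · have hne : pr r ≠ pr s := fun hh => hrs (pr_inj hh)
      simp [hne, hrs]
  simp only [Fin.sum_univ_two]
  rw [pd4_add (show DifferentiableAt ℝ (fun q : Pt4 => q (pr 0) * A 0 (base q) + q (pr 1) * A 1 (base q)) p from ((hterm 0).add (hterm 1))) hB', pd4_add (hterm 0) (hterm 1),
    pd4_pr_comp_base hB, hmul 0, hmul 1]
  fin_cases s <;> simp

section GGlemmas

variable (Γ : Fin 2 → Fin 2 → Fin 2 → Pt2 → ℝ) (Φ : Fin 2 → Fin 2 → Pt2 → ℝ)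

lemma unp_lt (k : Fin 2) : (unp k).1 < 2 := k.isLt
lemma pr_not_lt (k : Fin 2) : ¬ (pr k).1 < 2 := by simp [pr]
lemma unp_le (k : Fin 2) : (unp k).1 ≤ 1 := by show k.1 ≤ 1; have := k.isLt; omega
lemma pr_not_le (k : Fin 2) : ¬ (pr k).1 ≤ 1 := by show ¬ (k.1 + 2 ≤ 1); omega

lemma guuu (k i j : Fin 2) (q : Pt4) : GG Γ Φ (unp k) (unp i) (unp j) q = Γ k i j (base q) := by
  simp [GG, unp_lt, pr_not_lt, unp_le, pr_not_le]; rfl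
lemma gpuu (k i j : Fin 2) (q : Pt4) : GG Γ Φ (pr k) (unp i) (unp j) q = GammaPr Γ Φ k i j q := by
  simp [GG, unp_lt, pr_not_lt, unp_le, pr_not_le]; rfl
lemma gppu (k i j : Fin 2) (q : Pt4) : GG Γ Φ (pr k) (pr i) (unp j) q = -Γ i j k (base q) := by
  simp [GG, unp_lt, pr_not_lt, unp_le, pr_not_le]; rfl
lemma gpup (k i j : Fin 2) (q : Pt4) : GG Γ Φ (pr k) (unp i) (pr j) q = -Γ j i k (base q) := by
  simp [GG, unp_lt, pr_not_lt, unp_le, pr_not_le]; rfl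
lemma guxp (k : Fin 2) (b : Fin 4) (j : Fin 2) (q : Pt4) : GG Γ Φ (unp k) b (pr j) q = 0 := by
  simp [GG, unp_lt, pr_not_lt, unp_le, pr_not_le]
lemma gupx (k i : Fin 2) (c : Fin 4) (q : Pt4) : GG Γ Φ (unp k) (pr i) c q = 0 := by
  simp [GG, unp_lt, pr_not_lt, unp_le, pr_not_le]
lemma gppp (k i j : Fin 2) (q : Pt4) : GG Γ Φ (pr k) (pr i) (pr j) q = 0 := by
  simp [GG, unp_lt, pr_not_lt, unp_le, pr_not_le]

lemma guuu_fun (k i j : Fin 2) : GG Γ Φ (unp k) (unp i) (unp j) = fun q => Γ k i j (base q) :=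
  funext (guuu Γ Φ k i j)
lemma gpuu_fun (k i j : Fin 2) : GG Γ Φ (pr k) (unp i) (unp j) = GammaPr Γ Φ k i j :=
  funext (gpuu Γ Φ k i j)
lemma gppu_fun (k i j : Fin 2) : GG Γ Φ (pr k) (pr i) (unp j) = fun q => -Γ i j k (base q) :=
  funext (gppu Γ Φ k i j)
lemma gpup_fun (k i j : Fin 2) : GG Γ Φ (pr k) (unp i) (pr j) = fun q => -Γ j i k (base q) :=
  funext (gpup Γ Φ k i j)
lemma guxp_fun (k : Fin 2) (b : Fin 4) (j : Fin 2) :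
    GG Γ Φ (unp k) b (pr j) = fun _ => (0 : ℝ) := funext (guxp Γ Φ k b j)
lemma gupx_fun (k i : Fin 2) (c : Fin 4) :
    GG Γ Φ (unp k) (pr i) c = fun _ => (0 : ℝ) := funext (gupx Γ Φ k i c)
lemma gppp_fun (k i j : Fin 2) :
    GG Γ Φ (pr k) (pr i) (pr j) = fun _ => (0 : ℝ) := funext (gppp Γ Φ k i j)

lemma traceGG (hΓsym : ∀ k i j, Γ k i j = Γ k j i) (b : Fin 4) (q : Pt4) :
    ∑ c : Fin 4, GG Γ Φ c c b q = 0 := by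
  rw [sum4 (fun c => GG Γ Φ c c b q)]
  rcases cases4 b with ⟨j, rfl⟩ | ⟨j, rfl⟩
  · rw [guuu, guuu, gppu, gppu, hΓsym 0 j 0, hΓsym 1 j 1]
    ring
  · rw [guxp, guxp, gppp, gppp]
    ring

lemma traceGG_fun (hΓsym : ∀ k i j, Γ k i j = Γ k j i) (b : Fin 4) :
    (fun q => ∑ c : Fin 4, GG Γ Φ c c b q) = fun _ => (0 : ℝ) :=
  funext (traceGG Γ Φ hΓsym b)

end GGlemmas

/-- The coefficient of `x_{r'}` in `𝚪^{k'}_{ij}`. -/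
def Acoef (Γ : Fin 2 → Fin 2 → Fin 2 → Pt2 → ℝ) (k i j r : Fin 2) (y : Pt2) : ℝ :=
  pd2 k (Γ r i j) y - pd2 i (Γ r j k) y - pd2 j (Γ r i k) y
    + 2 * ∑ l : Fin 2, Γ r k l y * Γ l i j y

/-- The fiber-independent part of `𝚪^{k'}_{ij}`. -/
def Bcoef (Γ : Fin 2 → Fin 2 → Fin 2 → Pt2 → ℝ) (Φ : Fin 2 → Fin 2 → Pt2 → ℝ)
    (k i j : Fin 2) (y : Pt2) : ℝ :=
  (1 / 2) * (pd2 i (Φ j k) y + pd2 j (Φ i k) y - pd2 k (Φ i j) y)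
    - ∑ l : Fin 2, Φ k l y * Γ l i j y

section Deriv

variable {U : Set Pt2}
variable {Γ : Fin 2 → Fin 2 → Fin 2 → Pt2 → ℝ} {Φ : Fin 2 → Fin 2 → Pt2 → ℝ}

lemma GammaPr_shape (k i j : Fin 2) :
    GammaPr Γ Φ k i j
      = fun q => (∑ r : Fin 2, q (pr r) * Acoef Γ k i j r (base q))
          + Bcoef Γ Φ k i j (base q) := by
  funext q; simp only [GammaPr, Acoef, Bcoef]; ring

lemma Acoef_diffat (hU : IsOpen U) (hΓs : ∀ k i j, ContDiffOn ℝ (⊤ : ℕ∞) (Γ k i j) U) {x : Pt2} (hx : x ∈ U) (k i j r : Fin 2) :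
    DifferentiableAt ℝ (Acoef Γ k i j r) x := by
  have dΓ : ∀ a b c : Fin 2, DifferentiableAt ℝ (Γ a b c) x :=
    fun a b c => diffat_of_cdo hU (hΓs a b c) hx
  have dpΓ : ∀ (m : Fin 2) (a b c : Fin 2), DifferentiableAt ℝ (pd2 m (Γ a b c)) x :=
    fun m a b c => pd2_diffat hU (hΓs a b c) hx m
  unfold Acoef
  simp only [Fin.sum_univ_two]
  exact (((dpΓ k r i j).sub (dpΓ i r j k)).sub (dpΓ j r i k)).add
    ((differentiableAt_const 2).mul (((dΓ r k 0).mul (dΓ 0 i j)).add ((dΓ r k 1).mul (dΓ 1 i j))))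

lemma Bcoef_diffat (hU : IsOpen U) (hΓs : ∀ k i j, ContDiffOn ℝ (⊤ : ℕ∞) (Γ k i j) U) (hΦs : ∀ i j, ContDiffOn ℝ (⊤ : ℕ∞) (Φ i j) U) {x : Pt2} (hx : x ∈ U) (k i j : Fin 2) :
    DifferentiableAt ℝ (Bcoef Γ Φ k i j) x := by
  have dΓ : ∀ a b c : Fin 2, DifferentiableAt ℝ (Γ a b c) x :=
    fun a b c => diffat_of_cdo hU (hΓs a b c) hx
  have dΦ : ∀ a b : Fin 2, DifferentiableAt ℝ (Φ a b) x :=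
    fun a b => diffat_of_cdo hU (hΦs a b) hx
  have dpΦ : ∀ (m : Fin 2) (a b : Fin 2), DifferentiableAt ℝ (pd2 m (Φ a b)) x :=
    fun m a b => pd2_diffat hU (hΦs a b) hx m
  unfold Bcoef
  simp only [Fin.sum_univ_two]
  exact ((differentiableAt_const (1/2 : ℝ)).mul
      (((dpΦ i j k).add (dpΦ j i k)).sub (dpΦ k i j))).sub
    (((dΦ k 0).mul (dΓ 0 i j)).add ((dΦ k 1).mul (dΓ 1 i j)))

lemma pd4_pr_GammaPr (hU : IsOpen U) (hΓs : ∀ k i j, ContDiffOn ℝ (⊤ : ℕ∞) (Γ k i j) U) (hΦs : ∀ i j, ContDiffOn ℝ (⊤ : ℕ∞) (Φ i j) U) {p : Pt4} (hp : base p ∈ U) (s k i j : Fin 2) :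
    pd4 (pr s) (GammaPr Γ Φ k i j) p = Acoef Γ k i j s (base p) := by
  rw [GammaPr_shape]
  exact pd4_fiber_linear (Acoef Γ k i j) (Bcoef Γ Φ k i j)
    (fun r => Acoef_diffat hU hΓs hp k i j r) (Bcoef_diffat hU hΓs hΦs hp k i j) s

end Deriv

end Aux


section Comp

variable {U : Set Pt2}
variable {Γ : Fin 2 → Fin 2 → Fin 2 → Pt2 → ℝ} {Φ : Fin 2 → Fin 2 → Pt2 → ℝ}
variable {h : Pt2 → ℝ}

lemma hess4_uu (hU : IsOpen U) (hh : ContDiffOn ℝ (⊤ : ℕ∞) h U) {p : Pt4} (hp : base p ∈ U)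
    (i j : Fin 2) :
    hess4 Γ Φ (fun q => h (base q)) (unp i) (unp j) p = hessD Γ h i j (base p) := by
  have hV : IsOpen (base ⁻¹' U) := by rw [base_eq]; exact hU.preimage baseL.continuous
  have dh : ∀ x ∈ U, DifferentiableAt ℝ h x := fun x hx => diffat_of_cdo hU hh hx
  have hev : pd4 (unp j) (fun q => h (base q)) =ᶠ[nhds p] fun q => pd2 j h (base q) := by
    filter_upwards [hV.mem_nhds hp] with q hq
    exact pd4_unp_comp_base (dh _ hq) j
  unfold hess4
  rw [pd4_congr hev, pd4_unp_comp_base (pd2_diffat hU hh hp j) i,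
    sum4 (fun c => GG Γ Φ c (unp i) (unp j) p * pd4 c (fun q => h (base q)) p),
    guuu, guuu, gpuu, gpuu,
    pd4_unp_comp_base (dh _ hp) 0, pd4_unp_comp_base (dh _ hp) 1,
    pd4_pr_comp_base (dh _ hp) 0, pd4_pr_comp_base (dh _ hp) 1]
  unfold hessD
  rw [Fin.sum_univ_two]
  ring

lemma hess4_pu (hU : IsOpen U) (hh : ContDiffOn ℝ (⊤ : ℕ∞) h U) {p : Pt4} (hp : base p ∈ U)
    (i j : Fin 2) :
    hess4 Γ Φ (fun q => h (base q)) (pr i) (unp j) p = 0 := by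
  have hV : IsOpen (base ⁻¹' U) := by rw [base_eq]; exact hU.preimage baseL.continuous
  have dh : ∀ x ∈ U, DifferentiableAt ℝ h x := fun x hx => diffat_of_cdo hU hh hx
  have hev : pd4 (unp j) (fun q => h (base q)) =ᶠ[nhds p] fun q => pd2 j h (base q) := by
    filter_upwards [hV.mem_nhds hp] with q hq
    exact pd4_unp_comp_base (dh _ hq) j
  unfold hess4
  rw [pd4_congr hev, pd4_pr_comp_base (pd2_diffat hU hh hp j) i,
    sum4 (fun c => GG Γ Φ c (pr i) (unp j) p * pd4 c (fun q => h (base q)) p),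
    gupx, gupx, gppu, gppu,
    pd4_pr_comp_base (dh _ hp) 0, pd4_pr_comp_base (dh _ hp) 1]
  ring

lemma hess4_xp (hU : IsOpen U) (hh : ContDiffOn ℝ (⊤ : ℕ∞) h U) {p : Pt4} (hp : base p ∈ U)
    (a : Fin 4) (j : Fin 2) :
    hess4 Γ Φ (fun q => h (base q)) a (pr j) p = 0 := by
  have hV : IsOpen (base ⁻¹' U) := by rw [base_eq]; exact hU.preimage baseL.continuous
  have dh : ∀ x ∈ U, DifferentiableAt ℝ h x := fun x hx => diffat_of_cdo hU hh hx
  have hev : pd4 (pr j) (fun q => h (base q)) =ᶠ[nhds p] fun _ => (0 : ℝ) := by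
    filter_upwards [hV.mem_nhds hp] with q hq
    exact pd4_pr_comp_base (dh _ hq) j
  unfold hess4
  rw [pd4_congr hev, pd4_const,
    sum4 (fun c => GG Γ Φ c a (pr j) p * pd4 c (fun q => h (base q)) p),
    guxp, guxp,
    pd4_pr_comp_base (dh _ hp) 0, pd4_pr_comp_base (dh _ hp) 1]
  ring

end Comp


section Ric

variable {U : Set Pt2}
variable {Γ : Fin 2 → Fin 2 → Fin 2 → Pt2 → ℝ} {Φ : Fin 2 → Fin 2 → Pt2 → ℝ}

lemma ricci4_uu (hU : IsOpen U) (hΓs : ∀ k i j, ContDiffOn ℝ (⊤ : ℕ∞) (Γ k i j) U)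
    (hΦs : ∀ i j, ContDiffOn ℝ (⊤ : ℕ∞) (Φ i j) U) (hΓsym : ∀ k i j, Γ k i j = Γ k j i)
    {p : Pt4} (hp : base p ∈ U) (i j : Fin 2) :
    ricci4 Γ Φ (unp i) (unp j) p = 2 * ricciDSym Γ i j (base p) := by
  have dΓ : ∀ a b c : Fin 2, DifferentiableAt ℝ (Γ a b c) (base p) :=
    fun a b c => diffat_of_cdo hU (hΓs a b c) hp
  unfold ricci4
  rw [traceGG_fun Γ Φ hΓsym (unp j), pd4_const,
    sum4 (fun c => pd4 c (GG Γ Φ c (unp i) (unp j)) p),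
    guuu_fun, guuu_fun, gpuu_fun, gpuu_fun,
    pd4_unp_comp_base (dΓ 0 i j) 0, pd4_unp_comp_base (dΓ 1 i j) 1,
    pd4_pr_GammaPr hU hΓs hΦs hp 0 0 i j, pd4_pr_GammaPr hU hΓs hΦs hp 1 1 i j]
  simp only [sum4, guuu, gpuu, gppu, gpup, guxp, gupx, gppp]
  unfold ricciDSym ricciD Acoef
  simp only [Fin.sum_univ_two]
  rw [pd2_add (dΓ 0 0 j) (dΓ 1 1 j) i, pd2_add (dΓ 0 0 i) (dΓ 1 1 i) j]
  simp only [hΓsym 0 j 0, hΓsym 1 j 1, hΓsym 0 i 0, hΓsym 1 i 1,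
    hΓsym 0 i 1, hΓsym 1 i 0, hΓsym 0 j 1, hΓsym 1 j 0, hΓsym 0 j i, hΓsym 1 j i,
    hΓsym 0 1 0, hΓsym 1 1 0]
  ring

end Ric


section Ric2

variable {U : Set Pt2}
variable {Γ : Fin 2 → Fin 2 → Fin 2 → Pt2 → ℝ} {Φ : Fin 2 → Fin 2 → Pt2 → ℝ}

lemma ricci4_pu (hU : IsOpen U) (hΓs : ∀ k i j, ContDiffOn ℝ (⊤ : ℕ∞) (Γ k i j) U)
    (hΓsym : ∀ k i j, Γ k i j = Γ k j i)
    {p : Pt4} (hp : base p ∈ U) (i j : Fin 2) :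
    ricci4 Γ Φ (pr i) (unp j) p = 0 := by
  have dΓ : ∀ a b c : Fin 2, DifferentiableAt ℝ (Γ a b c) (base p) :=
    fun a b c => diffat_of_cdo hU (hΓs a b c) hp
  have e0 : pd4 (pr 0) (fun q => -Γ i j 0 (base q)) p = 0 :=
    pd4_pr_comp_base (g := fun y => -Γ i j 0 y) ((dΓ i j 0).neg) 0
  have e1 : pd4 (pr 1) (fun q => -Γ i j 1 (base q)) p = 0 :=
    pd4_pr_comp_base (g := fun y => -Γ i j 1 y) ((dΓ i j 1).neg) 1
  unfold ricci4
  rw [traceGG_fun Γ Φ hΓsym (unp j), pd4_const,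
    sum4 (fun c => pd4 c (GG Γ Φ c (pr i) (unp j)) p),
    gupx_fun, gupx_fun, gppu_fun, gppu_fun, pd4_const, pd4_const, e0, e1]
  simp only [sum4, guuu, gpuu, gppu, gpup, guxp, gupx, gppp]
  ring

lemma ricci4_xp (hU : IsOpen U) (hΓs : ∀ k i j, ContDiffOn ℝ (⊤ : ℕ∞) (Γ k i j) U)
    (hΓsym : ∀ k i j, Γ k i j = Γ k j i)
    {p : Pt4} (hp : base p ∈ U) (a : Fin 4) (j : Fin 2) :
    ricci4 Γ Φ a (pr j) p = 0 := by
  have dΓ : ∀ a b c : Fin 2, DifferentiableAt ℝ (Γ a b c) (base p) :=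
    fun a b c => diffat_of_cdo hU (hΓs a b c) hp
  unfold ricci4
  rw [traceGG_fun Γ Φ hΓsym (pr j), pd4_const]
  rcases cases4 a with ⟨i, rfl⟩ | ⟨i, rfl⟩
  · have e0 : pd4 (pr 0) (fun q => -Γ j i 0 (base q)) p = 0 :=
      pd4_pr_comp_base (g := fun y => -Γ j i 0 y) ((dΓ j i 0).neg) 0
    have e1 : pd4 (pr 1) (fun q => -Γ j i 1 (base q)) p = 0 :=
      pd4_pr_comp_base (g := fun y => -Γ j i 1 y) ((dΓ j i 1).neg) 1
    rw [sum4 (fun c => pd4 c (GG Γ Φ c (unp i) (pr j)) p),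
      guxp_fun, guxp_fun, gpup_fun, gpup_fun, pd4_const, pd4_const, e0, e1]
    simp only [sum4, guuu, gpuu, gppu, gpup, guxp, gupx, gppp]
    ring
  · rw [sum4 (fun c => pd4 c (GG Γ Φ c (pr i) (pr j)) p),
      guxp_fun, guxp_fun, gppp_fun, gppp_fun, pd4_const, pd4_const, pd4_const, pd4_const]
    simp only [sum4, guuu, gpuu, gppu, gpup, guxp, gupx, gppp]
    ring

end Ric2

lemma gDE_up (Γ : Fin 2 → Fin 2 → Fin 2 → Pt2 → ℝ) (Φ : Fin 2 → Fin 2 → Pt2 → ℝ) (p : Pt4) :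
    gDE Γ Φ (unp 0) (pr 0) p = 1 := by
  simp [gDE, unp, pr]


/-- For `f = π*h` (the pullback of a smooth `h : U → ℝ`), the gradient
Ricci soliton equation `Hes_f + ρ = λ g_{D,Φ}` holds on `U × ℝ²` if and only if `λ = 0`
and `h` satisfies the affine gradient Ricci soliton equation
`∂_i∂_j h − Σ_k Γ^k_{ij} ∂_k h + 2 ρ^{D,sym}_{ij} = 0` on `U`.  In particular this holds
for every choice of the deformation tensor `Φ`. -/
theorem stmt4 (U : Set Pt2) (hU : IsOpen U) (hUne : U.Nonempty)
    (Γ : Fin 2 → Fin 2 → Fin 2 → Pt2 → ℝ)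
    (hΓsmooth : ∀ k i j, ContDiffOn ℝ (⊤ : ℕ∞) (Γ k i j) U)
    (hΓsym : ∀ k i j, Γ k i j = Γ k j i)
    (Φ : Fin 2 → Fin 2 → Pt2 → ℝ)
    (hΦsmooth : ∀ i j, ContDiffOn ℝ (⊤ : ℕ∞) (Φ i j) U)
    (hΦsym : ∀ i j, Φ i j = Φ j i)
    (h : Pt2 → ℝ) (hh : ContDiffOn ℝ (⊤ : ℕ∞) h U) (lam : ℝ)
    (f : Pt4 → ℝ) (hf : f = fun p => h (base p)) :
    (∀ p : Pt4, base p ∈ U → ∀ a b : Fin 4,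
        hess4 Γ Φ f a b p + ricci4 Γ Φ a b p = lam * gDE Γ Φ a b p)
      ↔ (lam = 0 ∧ ∀ q ∈ U, ∀ i j : Fin 2, hessD Γ h i j q + 2 * ricciDSym Γ i j q = 0) := by
  subst hf
  have hb4 : ∀ q : Pt2, base ![q 0, q 1, 0, 0] = q := by
    intro q; funext i; fin_cases i <;> rfl
  constructor
  · intro H
    have hlam : lam = 0 := by
      obtain ⟨q0, hq0⟩ := hUne
      have hmem : base ![q0 0, q0 1, 0, 0] ∈ U := by rw [hb4]; exact hq0
      have h1 := H ![q0 0, q0 1, 0, 0] hmem (unp 0) (pr 0)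
      rw [hess4_xp hU hh hmem (unp 0) 0, ricci4_xp hU hΓsmooth hΓsym hmem (unp 0) 0,
        gDE_up] at h1
      linarith
    refine ⟨hlam, ?_⟩
    intro q hq i j
    have hmem : base ![q 0, q 1, 0, 0] ∈ U := by rw [hb4]; exact hq
    have h1 := H ![q 0, q 1, 0, 0] hmem (unp i) (unp j)
    rw [hess4_uu hU hh hmem i j, ricci4_uu hU hΓsmooth hΦsmooth hΓsym hmem i j,
      hlam, zero_mul, hb4] at h1
    exact h1
  · rintro ⟨hlam, hsol⟩ p hp a b
    rw [hlam, zero_mul]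
    rcases cases4 a with ⟨i, rfl⟩ | ⟨i, rfl⟩ <;> rcases cases4 b with ⟨j, rfl⟩ | ⟨j, rfl⟩
    · rw [hess4_uu hU hh hp i j, ricci4_uu hU hΓsmooth hΦsmooth hΓsym hp i j]
      exact hsol (base p) hp i j
    · rw [hess4_xp hU hh hp (unp i) j, ricci4_xp hU hΓsmooth hΓsym hp (unp i) j]; ring
    · rw [hess4_pu hU hh hp i j, ricci4_pu hU hΓsmooth hΓsym hp i j]; ring
    · rw [hess4_xp hU hh hp (pr i) j, ricci4_xp hU hΓsmooth hΓsym hp (pr i) j]; ring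

end
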